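/- Let x, y ∈ ℝ^N be sorted in nondecreasing order with Σ_i x_i = 0 and Σ_i y_i = 0, and let c ≥ 0 be a constant. If (Σ_i x_i y_i + c)² ≥ (Σ_i x_i y_{N+1−i} + c)², then for every permutation σ of {1,...,N}: (Σ_i x_i y_{σ(i)} + c)² ≤ (Σ_i x_i y_i + c)². Otherwise, (Σ_i x_i y_{σ(i)} + c)² ≤ (Σ_i x_i y_{N+1−i} + c)² for every permutation σ. -/

import Mathlib

/-!
By the rearrangement inequality, every permutation `σ` satisfies
`∑ x_i y_{N+1-i} ≤ ∑ x_i y_{σ(i)} ≤ ∑ x_i y_i`, so `∑ x_i y_{σ(i)} + c` lies between the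
anti-identity and identity values, and a square on an interval is maximized at an endpoint.
-/

open Finset

theorem sq_le_max_sq_of_le_of_le {α : Type*} [Ring α] [LinearOrder α] [IsStrictOrderedRing α]
    {a b c : α} (hab : a ≤ b) (hbc : b ≤ c) : b ^ 2 ≤ max (a ^ 2) (c ^ 2) := by
  rcases le_total 0 b with hb | hb
  · exact le_max_of_le_right (pow_le_pow_left₀ hb hbc 2)
  · refine le_max_of_le_left ?_
    rw [← neg_sq a, ← neg_sq b]
    exact pow_le_pow_left₀ (neg_nonneg.2 hb) (neg_le_neg hab) 2

section Rearrangement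

variable {α : Type*} [Semiring α] [LinearOrder α] [IsStrictOrderedRing α] [ExistsAddOfLE α]
  {N : ℕ} {x y : Fin N → α}

theorem Monotone.sum_mul_comp_perm_le_sum_mul (hx : Monotone x) (hy : Monotone y)
    (σ : Equiv.Perm (Fin N)) : ∑ i, x i * y (σ i) ≤ ∑ i, x i * y i :=
  (hx.monovary hy).sum_mul_comp_perm_le_sum_mul

theorem Monotone.sum_mul_rev_le_sum_mul_comp_perm (hx : Monotone x) (hy : Monotone y)
    (σ : Equiv.Perm (Fin N)) : ∑ i, x i * y i.rev ≤ ∑ i, x i * y (σ i) := by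
  simpa only [Function.comp_apply, Equiv.trans_apply, Fin.revPerm_apply, Fin.rev_rev] using
    (hx.antivary (hy.comp_antitone Fin.rev_anti)).sum_mul_le_sum_mul_comp_perm
      (σ := σ.trans Fin.revPerm)

end Rearrangement

theorem fgw_reduced_objective_max_general (N : ℕ) (x y : Fin N → ℝ)
    (hx : Monotone x) (hy : Monotone y)
    (c : ℝ) :
    (((∑ i, x i * y i + c) ^ 2 ≥ (∑ i, x i * y i.rev + c) ^ 2) →
        ∀ σ : Equiv.Perm (Fin N),
          (∑ i, x i * y (σ i) + c) ^ 2 ≤ (∑ i, x i * y i + c) ^ 2)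
    ∧ (¬ ((∑ i, x i * y i + c) ^ 2 ≥ (∑ i, x i * y i.rev + c) ^ 2) →
        ∀ σ : Equiv.Perm (Fin N),
          (∑ i, x i * y (σ i) + c) ^ 2 ≤ (∑ i, x i * y i.rev + c) ^ 2) := by
  have hmax (σ : Equiv.Perm (Fin N)) :=
    sq_le_max_sq_of_le_of_le
      (add_le_add_left (hx.sum_mul_rev_le_sum_mul_comp_perm hy σ) c)
      (add_le_add_left (hx.sum_mul_comp_perm_le_sum_mul hy σ) c)
  refine ⟨fun h σ => ?_, fun h σ => ?_⟩
  · simpa only [max_eq_right h] using hmax σ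
  · simpa only [max_eq_left (not_le.1 h).le] using hmax σ

/-- For zero-mean nondecreasing sequences, `(∑ x_i y_{σ(i)} + c)²` is maximized either
at the identity or at the anti-identity permutation. -/
theorem fgw_reduced_objective_max (N : ℕ) (x y : Fin N → ℝ)
    (hx : Monotone x) (hy : Monotone y)
    (hx0 : ∑ i, x i = 0) (hy0 : ∑ i, y i = 0)
    (c : ℝ) (hc : 0 ≤ c) :
    (((∑ i, x i * y i + c) ^ 2 ≥ (∑ i, x i * y i.rev + c) ^ 2) →
        ∀ σ : Equiv.Perm (Fin N),
          (∑ i, x i * y (σ i) + c) ^ 2 ≤ (∑ i, x i * y i + c) ^ 2)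
    ∧ (¬ ((∑ i, x i * y i + c) ^ 2 ≥ (∑ i, x i * y i.rev + c) ^ 2) →
        ∀ σ : Equiv.Perm (Fin N),
          (∑ i, x i * y (σ i) + c) ^ 2 ≤ (∑ i, x i * y i.rev + c) ^ 2) :=
  fgw_reduced_objective_max_general N x y hx hy c
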